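/- Sibson's coordinate identity: natural neighbor weights form barycentric coordinates, i.e., if w_i ≥ 0 are the natural neighbor weights of a point s with respect to sites s_i (w_i = area(V ∩ V_i)/area(V)), then Σ_i w_i = 1 and Σ_i w_i s_i = s. -/

import Mathlib

open MeasureTheory

noncomputable section

/-- The Voronoï cell of the site `p` with respect to the site set `T`. -/
def voronoiCell (T : Set (EuclideanSpace ℝ (Fin 2))) (p : EuclideanSpace ℝ (Fin 2)) :
    Set (EuclideanSpace ℝ (Fin 2)) :=
  {x | ∀ q ∈ T, dist x p ≤ dist x q}

open RealInnerProductSpace Metric Set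
open scoped ENNReal NNReal

namespace Sibson

abbrev E2 := EuclideanSpace ℝ (Fin 2)

lemma isClosed_voronoiCell (T : Set E2) (p : E2) : IsClosed (voronoiCell T p) := by
  have : voronoiCell T p = ⋂ q ∈ T, {x : E2 | dist x p ≤ dist x q} := by
    ext x; simp [voronoiCell]
  rw [this]
  exact isClosed_biInter fun q _ =>
    isClosed_le (continuous_id.dist continuous_const) (continuous_id.dist continuous_const)

lemma bisector_null (u : E2) (hu : u ≠ 0) (c : ℝ) : volume {x : E2 | ⟪u, x⟫ = c} = 0 := by
  set K := LinearMap.ker (innerSL ℝ u).toLinearMap with hK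
  have hKne : K ≠ ⊤ := by
    intro h
    have : ⟪u, u⟫ = 0 := by
      have : u ∈ K := h ▸ Submodule.mem_top
      simpa [hK] using this
    exact hu (inner_self_eq_zero.mp this)
  set x₀ : E2 := (c / ⟪u, u⟫) • u with hx₀
  have h1 : {x : E2 | ⟪u, x⟫ = c} = (fun x => x + (-x₀)) ⁻¹' (K : Set E2) := by
    ext x
    have hiu : ⟪u, u⟫ ≠ 0 := fun h => hu (inner_self_eq_zero.mp h)
    simp only [mem_setOf_eq, mem_preimage, SetLike.mem_coe, hK, LinearMap.mem_ker, ContinuousLinearMap.coe_coe]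
    rw [innerSL_apply_apply, inner_add_right, inner_neg_right, hx₀, inner_smul_right, div_mul_cancel₀ _ hiu]
    constructor
    · intro h; rw [h]; ring
    · intro h; linarith
  rw [h1, measure_preimage_add_right]
  exact Measure.addHaar_submodule volume K hKne

end Sibson

namespace Sibson

/-- The affine comparison function: `aff s p x = dist x s ^ 2 - dist x p ^ 2`. -/
def aff (s p : E2) (x : E2) : ℝ := 2 * ⟪p - s, x⟫ + (‖s‖ ^ 2 - ‖p‖ ^ 2)

lemma dist_sq_sub (s p x : E2) : dist x s ^ 2 - dist x p ^ 2 = aff s p x := by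
  rw [dist_eq_norm, dist_eq_norm, aff, inner_sub_left]
  rw [@norm_sub_sq_real E2, @norm_sub_sq_real E2]
  rw [real_inner_comm p x, real_inner_comm s x]
  ring

lemma dist_le_iff_aff (s p x : E2) : dist x s ≤ dist x p ↔ aff s p x ≤ 0 := by
  rw [← dist_sq_sub]
  constructor
  · intro h; nlinarith [dist_nonneg (x := x) (y := s), dist_nonneg (x := x) (y := p)]
  · intro h; nlinarith [dist_nonneg (x := x) (y := s), dist_nonneg (x := x) (y := p)]

lemma dist_eq_iff_aff (s p x : E2) : dist x s = dist x p ↔ aff s p x = 0 := by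
  rw [← dist_sq_sub]
  constructor
  · intro h; rw [h]; ring
  · intro h; nlinarith [dist_nonneg (x := x) (y := s), dist_nonneg (x := x) (y := p)]

lemma equal_dist_null (a b : E2) (hab : a ≠ b) :
    volume {x : E2 | dist x a = dist x b} = 0 := by
  have h : {x : E2 | dist x a = dist x b} ⊆ {x : E2 | ⟪(2:ℝ) • (b - a), x⟫ = ‖b‖ ^ 2 - ‖a‖ ^ 2} := by
    intro x hx
    have h1 : aff a b x = 0 := by
      rw [← dist_eq_iff_aff]; exact hx
    rw [aff] at h1
    simp only [mem_setOf_eq, inner_smul_left, RCLike.conj_to_real]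
    linarith
  refine measure_mono_null h (bisector_null _ ?_ _)
  simp only [ne_eq, smul_eq_zero, OfNat.ofNat_ne_zero, false_or, sub_eq_zero]
  exact fun h => hab h.symm

lemma mem_V_iff (S : Finset E2) (s x : E2) :
    x ∈ voronoiCell (insert s ↑S) s ↔ ∀ p ∈ S, dist x s ≤ dist x p := by
  simp only [voronoiCell, mem_setOf_eq, Set.mem_insert_iff]
  constructor
  · intro h p hp; exact h p (Or.inr hp)
  · rintro h q (rfl | hq); · exact le_refl _
    exact h q hq

end Sibson

namespace Sibson

lemma V_bounded (S : Finset E2) (s : E2)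
    (hS : S.Nonempty)
    (hs : s ∈ interior (convexHull ℝ (S : Set E2))) :
    ∃ M > 0, voronoiCell (insert s ↑S) s ⊆ closedBall s M := by
  obtain ⟨r, rpos, hr⟩ : ∃ r > 0, ball s r ⊆ convexHull ℝ (S : Set E2) := by
    rcases Metric.mem_nhds_iff.mp (mem_interior_iff_mem_nhds.mp hs) with ⟨r, rpos, hr⟩
    exact ⟨r, rpos, hr⟩
  set D : ℝ := (S.sup' hS fun q => dist s q) + 1 with hD
  have hDpos : 0 < D := by
    have : 0 ≤ S.sup' hS fun q => dist s q := by
      obtain ⟨q, hq⟩ := hS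
      exact le_trans dist_nonneg (Finset.le_sup' _ hq)
    linarith
  have hDq : ∀ q ∈ S, dist s q ≤ D := fun q hq => by
    have := Finset.le_sup' (fun q => dist s q) hq
    linarith
  clear_value D
  refine ⟨D ^ 2 / r, by positivity, fun x hx => ?_⟩
  rw [mem_V_iff] at hx
  -- key inequality on the convex hull
  have key : ∀ y ∈ convexHull ℝ (S : Set E2), ⟪x - s, y⟫ ≤ D ^ 2 / 2 + ⟪x - s, s⟫ := by
    intro y hy
    have hconv : Convex ℝ {y : E2 | ⟪x - s, y⟫ ≤ D ^ 2 / 2 + ⟪x - s, s⟫} :=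
      convex_halfSpace_le
        ⟨fun a b => inner_add_right _ _ _, fun c a => real_inner_smul_right _ _ _⟩ _
    have hsub : (S : Set E2) ⊆ {y : E2 | ⟪x - s, y⟫ ≤ D ^ 2 / 2 + ⟪x - s, s⟫} := by
      intro q hq
      have hq' : q ∈ S := hq
      have h1 : dist x s ≤ dist x q := hx q hq'
      have h2 : ‖x - s‖ ^ 2 ≤ ‖x - q‖ ^ 2 := by
        rw [← dist_eq_norm, ← dist_eq_norm]
        nlinarith [dist_nonneg (x := x) (y := s), dist_nonneg (x := x) (y := q)]
      have h3 : ‖x - q‖ ^ 2 = ‖x - s‖ ^ 2 - 2 * ⟪x - s, q - s⟫ + ‖q - s‖ ^ 2 := by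
        have : x - q = (x - s) - (q - s) := by abel
        rw [this, @norm_sub_sq_real E2]
      have h4 : 2 * ⟪x - s, q - s⟫ ≤ ‖q - s‖ ^ 2 := by linarith
      have h5 : ‖q - s‖ ≤ D := by
        rw [← dist_eq_norm, dist_comm]; exact hDq q hq'
      have h6 : ‖q - s‖ ^ 2 ≤ D ^ 2 := by nlinarith [norm_nonneg (q - s)]
      have h7 : ⟪x - s, q - s⟫ = ⟪x - s, q⟫ - ⟪x - s, s⟫ := inner_sub_right _ _ _
      simp only [mem_setOf_eq]
      rw [h7] at h4
      show ⟪x - s, q⟫ ≤ D ^ 2 / 2 + ⟪x - s, s⟫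
      linarith
    exact convexHull_min hsub hconv hy
  -- conclude
  rcases eq_or_ne x s with rfl | hxs
  · simpa using by positivity
  · have hnorm : (0 : ℝ) < ‖x - s‖ := by
      rw [norm_pos_iff, sub_ne_zero]; exact hxs
    set y : E2 := s + (r / 2 * ‖x - s‖⁻¹) • (x - s) with hy
    have hyball : y ∈ ball s r := by
      rw [mem_ball, dist_comm, hy, dist_self_add_right, norm_smul]
      rw [Real.norm_eq_abs, abs_of_pos (by positivity : (0:ℝ) < r / 2 * ‖x - s‖⁻¹)]
      rw [mul_assoc, inv_mul_cancel₀ hnorm.ne', mul_one]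
      linarith
    have := key y (hr hyball)
    rw [hy, inner_add_right, real_inner_smul_right, real_inner_self_eq_norm_sq] at this
    have h8 : r / 2 * ‖x - s‖⁻¹ * ‖x - s‖ ^ 2 = r / 2 * ‖x - s‖ := by
      field_simp
    rw [h8] at this
    have h9 : r / 2 * ‖x - s‖ ≤ D ^ 2 / 2 := by linarith
    rw [mem_closedBall, dist_eq_norm, le_div_iff₀ rpos]
    nlinarith

lemma V_pos (S : Finset E2) (s : E2) (hS : S.Nonempty) (hsS : s ∉ S) :
    0 < volume (voronoiCell (insert s ↑S) s) := by
  set m : ℝ := S.inf' hS fun q => dist s q with hm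
  have hmpos : 0 < m := by
    rw [hm, Finset.lt_inf'_iff]
    intro q hq
    rw [dist_pos]
    rintro rfl; exact hsS hq
  have hball : ball s (m / 2) ⊆ voronoiCell (insert s ↑S) s := by
    intro x hxb
    rw [mem_V_iff]
    intro p hp
    have h1 : dist x s < m / 2 := mem_ball.mp hxb
    have h2 : m ≤ dist s p := Finset.inf'_le _ hp
    have h3 := dist_triangle s x p
    rw [dist_comm s x] at h3
    linarith
  calc (0 : ℝ≥0∞) < volume (ball s (m / 2)) := measure_ball_pos volume s (by linarith)
  _ ≤ _ := measure_mono hball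

lemma V_sum (S : Finset E2) (s : E2) (hS : S.Nonempty) :
    volume (voronoiCell (insert s ↑S) s) =
      ∑ p ∈ S, volume (voronoiCell (insert s ↑S) s ∩ voronoiCell (↑S) p) := by
  set V := voronoiCell (insert s ↑S) s with hV
  have hcover : V = ⋃ p ∈ S, V ∩ voronoiCell (↑S) p := by
    ext x
    simp only [mem_iUnion, mem_inter_iff, exists_prop]
    constructor
    · intro hx
      obtain ⟨p, hp, hmin⟩ := S.exists_min_image (fun q => dist x q) hS
      exact ⟨p, hp, hx, fun q hq => hmin q hq⟩
    · rintro ⟨p, _, hx, _⟩; exact hx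
  conv_lhs => rw [hcover]
  refine measure_biUnion_finset₀ ?_ fun p _ => ?_
  · intro p hp q hq hpq
    refine measure_mono_null ?_ (equal_dist_null p q hpq)
    rintro x ⟨⟨-, hxp⟩, ⟨-, hxq⟩⟩
    exact le_antisymm (hxp q hq) (hxq p hp)
  · exact (((isClosed_voronoiCell _ _).inter (isClosed_voronoiCell _ _)).measurableSet).nullMeasurableSet

end Sibson

namespace Sibson

lemma lipschitz_aff (s p : E2) (K : ℝ≥0) (hK : ‖p - s‖₊ ≤ K) :
    LipschitzWith (2 * K) (aff s p) := by
  rw [lipschitzWith_iff_dist_le_mul]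
  intro x y
  rw [Real.dist_eq, aff, aff]
  have h1 : 2 * ⟪p - s, x⟫ + (‖s‖ ^ 2 - ‖p‖ ^ 2) - (2 * ⟪p - s, y⟫ + (‖s‖ ^ 2 - ‖p‖ ^ 2)) =
      2 * ⟪p - s, x - y⟫ := by rw [inner_sub_right]; ring
  rw [h1, abs_mul, abs_two]
  have h2 : |⟪p - s, x - y⟫| ≤ ‖p - s‖ * ‖x - y‖ := abs_real_inner_le_norm _ _
  have h3 : ‖p - s‖ ≤ (K : ℝ) := by
    rw [← coe_nnnorm]; exact_mod_cast hK
  have h4 : ((2 * K : ℝ≥0) : ℝ) = 2 * (K : ℝ) := by push_cast; ring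
  rw [h4, dist_eq_norm]
  nlinarith [norm_nonneg (x - y), norm_nonneg (p - s), abs_nonneg (⟪p - s, x - y⟫ : ℝ)]

lemma lipschitz_sup' {ι : Type*} (S : Finset ι) (hS : S.Nonempty) (f : ι → E2 → ℝ) (K : ℝ≥0)
    (hf : ∀ p ∈ S, LipschitzWith K (f p)) :
    LipschitzWith K (fun x => S.sup' hS (f · x)) := by
  revert hf
  refine Finset.Nonempty.cons_induction (motive := fun T hT =>
      (∀ p ∈ T, LipschitzWith K (f p)) → LipschitzWith K fun x => T.sup' hT (f · x))
    ?_ ?_ hS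
  · intro a hf; simpa using hf a (by simp)
  · intro a T haT hT ih hf
    have h1 : (fun x => (Finset.cons a T haT).sup' (Finset.cons_nonempty haT) (f · x)) =
        fun x => max (f a x) (T.sup' hT (f · x)) := by
      funext x; rw [Finset.sup'_cons hT]
    rw [h1]
    have h2 := (hf a (Finset.mem_cons_self a T)).max
      (ih (fun p hp => hf p (Finset.mem_cons_of_mem hp)))
    simpa using h2

/-- The piecewise-affine function whose zero sublevel set is the cell `V`. -/
def gfun (S : Finset E2) (hS : S.Nonempty) (s : E2) (x : E2) : ℝ :=
  S.sup' hS fun p => aff s p x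

lemma gfun_nonpos_iff (S : Finset E2) (hS : S.Nonempty) (s x : E2) :
    gfun S hS s x ≤ 0 ↔ x ∈ voronoiCell (insert s ↑S) s := by
  rw [gfun, Finset.sup'_le_iff, mem_V_iff]
  exact forall₂_congr fun p hp => (dist_le_iff_aff s p x).symm

lemma lipschitz_gfun (S : Finset E2) (hS : S.Nonempty) (s : E2) :
    LipschitzWith (2 * S.sup fun p => ‖p - s‖₊) (gfun S hS s) :=
  lipschitz_sup' S hS _ _ fun p hp => lipschitz_aff s p _ (Finset.le_sup (f := fun p => ‖p - s‖₊) hp)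

/-- `hfun = min (gfun, 0)`; Lipschitz, compactly supported, with support in `V`. -/
def hfun (S : Finset E2) (hS : S.Nonempty) (s : E2) (x : E2) : ℝ :=
  min (gfun S hS s x) 0

lemma lipschitz_hfun (S : Finset E2) (hS : S.Nonempty) (s : E2) :
    LipschitzWith (2 * S.sup fun p => ‖p - s‖₊) (hfun S hS s) :=
  (lipschitz_gfun S hS s).min_const 0

lemma support_hfun_subset (S : Finset E2) (hS : S.Nonempty) (s : E2) :
    Function.support (hfun S hS s) ⊆ voronoiCell (insert s ↑S) s := by
  intro x hx
  rw [Function.mem_support, hfun] at hx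
  rw [← gfun_nonpos_iff S hS]
  by_contra hpos
  push_neg at hpos
  exact hx (min_eq_right hpos.le)

lemma hasCompactSupport_hfun (S : Finset E2) (hS : S.Nonempty) (s : E2)
    (hs : s ∈ interior (convexHull ℝ (S : Set E2))) :
    HasCompactSupport (hfun S hS s) := by
  obtain ⟨M, hM, hsub⟩ := V_bounded S s hS hs
  rw [HasCompactSupport]
  refine IsCompact.of_isClosed_subset (isCompact_closedBall s M) (isClosed_tsupport _) ?_
  rw [tsupport]
  refine closure_minimal ?_ Metric.isClosed_closedBall
  exact fun x hx => hsub (support_hfun_subset S hS s hx)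

lemma lineDeriv_of_locally_zero (f : E2 → ℝ) (x v : E2) (h : ∀ᶠ y in nhds x, f y = 0) :
    lineDeriv ℝ f x v = 0 := by
  have h1 : f =ᶠ[nhds x] fun _ => (0 : ℝ) := h
  rw [h1.lineDeriv_eq]
  have h2 : HasLineDerivAt ℝ (fun _ : E2 => (0 : ℝ)) (0 : ℝ) x v :=
    (hasFDerivAt_const (0 : ℝ) x).hasLineDerivAt v
  exact h2.lineDeriv

lemma lineDeriv_of_locally_aff (s p : E2) (f : E2 → ℝ) (x v : E2)
    (h : ∀ᶠ y in nhds x, f y = aff s p y) :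
    lineDeriv ℝ f x v = 2 * ⟪p - s, v⟫ := by
  have h1 : f =ᶠ[nhds x] aff s p := h
  rw [h1.lineDeriv_eq]
  have h2 : HasFDerivAt (aff s p) ((2 : ℝ) • (innerSL ℝ (p - s))) x := by
    have h3 : HasFDerivAt (fun y : E2 => ⟪p - s, y⟫) (innerSL ℝ (p - s)) x :=
      (innerSL ℝ (p - s)).hasFDerivAt
    have h4 := (h3.const_smul (2 : ℝ)).add_const (‖s‖ ^ 2 - ‖p‖ ^ 2)
    have he : aff s p = fun y : E2 => (2:ℝ) • (⟪p - s, y⟫ : ℝ) + (‖s‖ ^ 2 - ‖p‖ ^ 2) := by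
      funext y
      simp only [aff, smul_eq_mul]
    rw [he]
    exact h4
  have h5 := (h2.hasLineDerivAt v).lineDeriv
  rw [h5]
  rw [ContinuousLinearMap.smul_apply, innerSL_apply_apply, smul_eq_mul]

end Sibson

namespace Sibson

lemma lineDeriv_of_locally_const (f : E2 → ℝ) (c : ℝ) (x v : E2)
    (h : ∀ᶠ y in nhds x, f y = c) :
    lineDeriv ℝ f x v = 0 := by
  have h1 : f =ᶠ[nhds x] fun _ => c := h
  rw [h1.lineDeriv_eq]
  have h2 : HasLineDerivAt ℝ (fun _ : E2 => c) (0 : ℝ) x v :=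
    (hasFDerivAt_const c x).hasLineDerivAt v
  exact h2.lineDeriv

lemma integral_lineDeriv_zero (f : E2 → ℝ) (C : ℝ≥0) (hf : LipschitzWith C f)
    (hsupp : HasCompactSupport f) (v : E2) :
    ∫ x, lineDeriv ℝ f x v = 0 := by
  obtain ⟨R, hR⟩ : ∃ R : ℝ, tsupport f ⊆ closedBall 0 R :=
    hsupp.isBounded.subset_closedBall 0
  -- the cutoff function
  set φ : E2 → ℝ := fun x => min (max (R + 2 - ‖x‖) 0) 1 with hφ
  have hφ1 : ∀ x : E2, ‖x‖ ≤ R + 1 → φ x = 1 := by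
    intro x hx
    rw [hφ]
    simp only
    rw [max_eq_left (by linarith), min_eq_right (by linarith)]
  have hlipφ : LipschitzWith 1 φ := by
    have l1 : LipschitzWith 1 fun x : E2 => R + 2 - ‖x‖ := by
      rw [lipschitzWith_iff_dist_le_mul]
      intro x y
      rw [Real.dist_eq]
      have : R + 2 - ‖x‖ - (R + 2 - ‖y‖) = ‖y‖ - ‖x‖ := by ring
      rw [this]
      have := abs_norm_sub_norm_le y x
      rw [NNReal.coe_one, one_mul, dist_eq_norm, ← norm_sub_rev]
      exact this
    exact (l1.max_const 0).min_const 1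
  have key := hlipφ.integral_lineDeriv_mul_eq (μ := volume) hf hsupp (-v)
  rw [neg_neg] at key
  have lhs0 : ∀ x, lineDeriv ℝ φ x (-v) * f x = 0 := by
    intro x
    rcases eq_or_ne (f x) 0 with hfx | hfx
    · rw [hfx, mul_zero]
    · have hx : x ∈ closedBall (0 : E2) R := hR (subset_tsupport f (by exact hfx))
      have : lineDeriv ℝ φ x (-v) = 0 := by
        apply lineDeriv_of_locally_const φ 1
        have hopen : ∀ᶠ y in nhds x, y ∈ ball (0 : E2) (R + 1) := by
          apply IsOpen.eventually_mem isOpen_ball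
          rw [mem_ball, dist_zero_right]
          have := mem_closedBall.mp hx
          rw [dist_zero_right] at this
          linarith
        filter_upwards [hopen] with y hy
        exact hφ1 y (by rw [mem_ball, dist_zero_right] at hy; linarith)
      rw [this, zero_mul]
  have rhs : ∀ x, lineDeriv ℝ f x v * φ x = lineDeriv ℝ f x v := by
    intro x
    rcases le_or_gt ‖x‖ (R + 1) with hx | hx
    · rw [hφ1 x hx, mul_one]
    · have hxn : x ∉ tsupport f := by
        intro hmem
        have := mem_closedBall.mp (hR hmem)
        rw [dist_zero_right] at this
        linarith
      have : lineDeriv ℝ f x v = 0 := by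
        apply lineDeriv_of_locally_const f 0
        have : ∀ᶠ y in nhds x, y ∉ tsupport f :=
          IsOpen.eventually_mem (isClosed_tsupport f).isOpen_compl hxn
        filter_upwards [this] with y hy
        exact image_eq_zero_of_notMem_tsupport hy
      rw [this, zero_mul]
  calc ∫ x, lineDeriv ℝ f x v = ∫ x, lineDeriv ℝ f x v * φ x := by
        congr 1; funext x; rw [rhs x]
  _ = ∫ x, lineDeriv ℝ φ x (-v) * f x := key.symm
  _ = 0 := by simp only [lhs0, integral_zero]

end Sibson

namespace Sibson

lemma continuous_aff (s p : E2) : Continuous (aff s p) := by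
  unfold aff
  exact ((continuous_const.mul (Continuous.inner continuous_const continuous_id)).add
    continuous_const)

lemma key_identity (S : Finset E2) (s : E2) (hS : S.Nonempty)
    (hs : s ∈ interior (convexHull ℝ (S : Set E2))) (hsS : s ∉ S) (v : E2) :
    ∑ p ∈ S, (volume (voronoiCell (insert s ↑S) s ∩ voronoiCell (↑S) p)).toReal *
      (2 * ⟪p - s, v⟫) = 0 := by
  classical
  set V := voronoiCell (insert s ↑S) s with hV
  set h : E2 → ℝ := hfun S hS s with hh
  -- the null set of ties
  set N : Set E2 := (⋃ p ∈ (S : Set E2), ⋃ q ∈ (S : Set E2), ⋃ (_ : p ≠ q),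
      {x : E2 | dist x p = dist x q}) ∪ ⋃ p ∈ (S : Set E2), {x : E2 | dist x s = dist x p}
    with hN
  have hNnull : volume N = 0 := by
    rw [hN]
    apply measure_union_null
    · rw [measure_biUnion_null_iff S.countable_toSet]
      intro p hp
      rw [measure_biUnion_null_iff S.countable_toSet]
      intro q hq
      rcases eq_or_ne p q with rfl | hpq
      · simp
      · simpa [hpq] using equal_dist_null p q hpq
    · rw [measure_biUnion_null_iff S.countable_toSet]
      intro p hp
      apply equal_dist_null
      rintro rfl; exact hsS hp
  -- pointwise description of the line derivative away from N
  have hptwise : ∀ x ∉ N, lineDeriv ℝ h x v =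
      ∑ p ∈ S, Set.indicator (V ∩ voronoiCell (↑S) p) (fun _ => 2 * ⟪p - s, v⟫) x := by
    intro x hxN
    have hcont : Continuous (gfun S hS s) := (lipschitz_gfun S hS s).continuous
    rcases lt_trichotomy (gfun S hS s x) 0 with hneg | hzero | hpos
    · -- x is in the interior region: h is locally an affine function
      obtain ⟨p₀, hp₀S, hp₀min⟩ := S.exists_min_image (fun q => dist x q) hS
      have hstrict : ∀ q ∈ S, q ≠ p₀ → dist x p₀ < dist x q := by
        intro q hq hqp
        rcases lt_or_eq_of_le (hp₀min q hq) with hlt | heq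
        · exact hlt
        · exfalso
          apply hxN
          rw [hN]
          left
          refine Set.mem_biUnion hp₀S ?_
          refine Set.mem_biUnion hq ?_
          simp only [Set.mem_iUnion]
          exact ⟨hqp.symm, heq⟩
      -- near x, h = aff s p₀
      have heventually : ∀ᶠ y in nhds x, h y = aff s p₀ y := by
        have hev1 : ∀ᶠ y in nhds x, gfun S hS s y < 0 :=
          (hcont.continuousAt (x := x)).eventually_lt continuousAt_const hneg
        have hev2 : ∀ᶠ y in nhds x, ∀ q ∈ S.erase p₀, aff s q y < aff s p₀ y := by
          rw [Filter.eventually_all_finset]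
          intro q hq
          have hq' : q ∈ S := Finset.mem_of_mem_erase hq
          have hqp : q ≠ p₀ := Finset.ne_of_mem_erase hq
          have hx : aff s q x < aff s p₀ x := by
            rw [← dist_sq_sub, ← dist_sq_sub]
            have := hstrict q hq' hqp
            nlinarith [dist_nonneg (x := x) (y := q), dist_nonneg (x := x) (y := p₀)]
          exact ((continuous_aff s q).continuousAt (x := x)).eventually_lt
            ((continuous_aff s p₀).continuousAt) hx
        filter_upwards [hev1, hev2] with y hy1 hy2
        have hsup : gfun S hS s y = aff s p₀ y := by
          apply le_antisymm
          · rw [gfun, Finset.sup'_le_iff]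
            intro q hq
            rcases eq_or_ne q p₀ with rfl | hqp
            · exact le_refl _
            · exact (hy2 q (Finset.mem_erase_of_ne_of_mem hqp hq)).le
          · exact Finset.le_sup' (fun p => aff s p y) hp₀S
        rw [hh, hfun, min_eq_left hy1.le, hsup]
      rw [lineDeriv_of_locally_aff s p₀ h x v heventually]
      -- evaluate the indicator sum
      have hxV : x ∈ V := by rw [hV, ← gfun_nonpos_iff S hS]; exact hneg.le
      have hxVp : x ∈ voronoiCell (↑S) p₀ := fun q hq => hp₀min q hq
      rw [Finset.sum_eq_single_of_mem p₀ hp₀S]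
      · rw [Set.indicator_of_mem (Set.mem_inter hxV hxVp)]
      · intro q hq hqp
        apply Set.indicator_of_notMem
        rintro ⟨-, hxq⟩
        exact absurd (hxq p₀ hp₀S) (not_le.mpr (hstrict q hq hqp))
    · -- ties with s are excluded
      exfalso
      obtain ⟨p, hpS, hps⟩ := Finset.exists_mem_eq_sup' hS fun p => aff s p x
      apply hxN
      rw [hN]
      right
      refine Set.mem_biUnion hpS ?_
      rw [Set.mem_setOf_eq, dist_eq_iff_aff, ← hps]
      exact hzero
    · -- x is outside V : h vanishes near x
      have heventually : ∀ᶠ y in nhds x, h y = 0 := by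
        have hev : ∀ᶠ y in nhds x, (0:ℝ) < gfun S hS s y :=
          continuousAt_const.eventually_lt (hcont.continuousAt (x := x)) hpos
        filter_upwards [hev] with y hy
        rw [hh, hfun, min_eq_right hy.le]
      rw [lineDeriv_of_locally_const h 0 x v heventually]
      have hxV : x ∉ V := by
        rw [hV, ← gfun_nonpos_iff S hS]
        exact not_le.mpr hpos
      rw [Finset.sum_eq_zero]
      intro q hq
      exact Set.indicator_of_notMem (fun hmem => hxV hmem.1) _
  -- integrate
  obtain ⟨M, hMpos, hMsub⟩ := V_bounded S s hS hs
  have hfin : ∀ p ∈ S, volume (V ∩ voronoiCell (↑S) p) < ⊤ := by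
    intro p hp
    refine lt_of_le_of_lt (measure_mono fun y hy => hMsub hy.1) measure_closedBall_lt_top
  have hmeas : ∀ p : E2, MeasurableSet (V ∩ voronoiCell (↑S) p) := fun p =>
    ((isClosed_voronoiCell _ _).inter (isClosed_voronoiCell _ _)).measurableSet
  have hae : ∀ᵐ x, lineDeriv ℝ h x v =
      ∑ p ∈ S, Set.indicator (V ∩ voronoiCell (↑S) p) (fun _ => 2 * ⟪p - s, v⟫) x := by
    have : ∀ᵐ x, x ∉ N := by
      rw [← compl_mem_ae_iff] at hNnull
      exact hNnull
    filter_upwards [this] with x hx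
    exact hptwise x hx
  have hint : ∫ x, lineDeriv ℝ h x v = ∑ p ∈ S,
      (volume (V ∩ voronoiCell (↑S) p)).toReal * (2 * ⟪p - s, v⟫) := by
    rw [integral_congr_ae hae]
    rw [integral_finset_sum]
    · refine Finset.sum_congr rfl fun p hp => ?_
      rw [integral_indicator_const _ (hmeas p)]
      rw [smul_eq_mul, measureReal_def]
    · intro p hp
      rw [integrable_indicator_iff (hmeas p)]
      exact integrableOn_const (hfin p hp).ne
  rw [← hint]
  exact integral_lineDeriv_zero h _ (lipschitz_hfun S hS s) (hasCompactSupport_hfun S hS s hs) v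

end Sibson

open Sibson in
theorem sibson_identity' (S : Finset (EuclideanSpace ℝ (Fin 2)))
    (s : EuclideanSpace ℝ (Fin 2))
    (hs : s ∈ interior (convexHull ℝ (S : Set (EuclideanSpace ℝ (Fin 2)))))
    (hsS : s ∉ S)
    (w : EuclideanSpace ℝ (Fin 2) → ℝ)
    (hw : ∀ p, w p =
      (volume (voronoiCell (insert s (S : Set (EuclideanSpace ℝ (Fin 2)))) s ∩
        voronoiCell (S : Set (EuclideanSpace ℝ (Fin 2))) p)).toReal /
      (volume (voronoiCell (insert s (S : Set (EuclideanSpace ℝ (Fin 2)))) s)).toReal) :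
    (∀ p ∈ S, 0 ≤ w p) ∧ ∑ p ∈ S, w p = 1 ∧ ∑ p ∈ S, w p • p = s := by
  have hS : S.Nonempty := by
    rcases S.eq_empty_or_nonempty with rfl | hS
    · simp at hs
    · exact hS
  set V := voronoiCell (insert s (S : Set E2)) s with hV
  set a : E2 → ℝ := fun p => (volume (V ∩ voronoiCell (↑S) p)).toReal with ha
  have hvolfin : volume V ≠ ⊤ := by
    obtain ⟨M, hM, hsub⟩ := V_bounded S s hS hs
    exact (lt_of_le_of_lt (measure_mono hsub) measure_closedBall_lt_top).ne
  have hvolpos : 0 < volume V := V_pos S s hS hsS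
  have hvr : 0 < (volume V).toReal := ENNReal.toReal_pos hvolpos.ne' hvolfin
  have hsum : ∑ p ∈ S, a p = (volume V).toReal := by
    rw [ha]
    rw [← ENNReal.toReal_sum (fun p hp => ?_), ← V_sum S s hS]
    exact (lt_of_le_of_lt (measure_mono Set.inter_subset_left) hvolfin.lt_top).ne
  have hw' : ∀ p, w p = a p / (volume V).toReal := fun p => hw p
  refine ⟨fun p _ => by rw [hw' p]; positivity, ?_, ?_⟩
  · rw [Finset.sum_congr rfl fun p _ => hw' p, ← Finset.sum_div, hsum, div_self hvr.ne']
  · -- the barycentric identity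
    set T : E2 := ∑ p ∈ S, a p • (p - s) with hT
    have hTzero : T = 0 := by
      rw [← inner_self_eq_zero (𝕜 := ℝ)]
      have hkey := key_identity S s hS hs hsS T
      have expand : (⟪T, T⟫ : ℝ) = ∑ p ∈ S, a p * ⟪p - s, T⟫ := by
        conv_lhs => rw [hT]
        rw [sum_inner]
        exact Finset.sum_congr rfl fun p hp => real_inner_smul_left _ _ _
      rw [expand]
      calc ∑ p ∈ S, a p * ⟪p - s, T⟫
          = (1/2) * ∑ p ∈ S, a p * (2 * ⟪p - s, T⟫) := by
            rw [Finset.mul_sum]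
            exact Finset.sum_congr rfl fun p hp => by ring
      _ = 0 := by rw [hkey]; ring
    have hsplit : ∑ p ∈ S, a p • p = (volume V).toReal • s := by
      have h1 : ∑ p ∈ S, a p • (p - s) = ∑ p ∈ S, a p • p - ∑ p ∈ S, a p • s := by
        rw [← Finset.sum_sub_distrib]
        refine Finset.sum_congr rfl fun p hp => smul_sub _ _ _
      have h2 : ∑ p ∈ S, a p • s = (volume V).toReal • s := by
        rw [← Finset.sum_smul, hsum]
      rw [← hT] at h1
      rw [hTzero, h2] at h1
      exact sub_eq_zero.mp h1.symm
    calc ∑ p ∈ S, w p • p = ((volume V).toReal)⁻¹ • ∑ p ∈ S, a p • p := by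
          rw [Finset.smul_sum]
          refine Finset.sum_congr rfl fun p hp => ?_
          rw [hw' p, div_eq_inv_mul, mul_smul]
    _ = s := by rw [hsplit, smul_smul, inv_mul_cancel₀ hvr.ne', one_smul]


/-- Sibson's coordinate identity: the natural neighbor weights
`w p = area(V ∩ V_p)/area(V)` — where `V` is the Voronoï cell of `s` in the Voronoï
diagram of `S ∪ {s}` and `V_p` that of `p` in the diagram of `S` — are barycentric
coordinates for `s`: they are nonnegative, sum to `1`, and `Σ w p • p = s`. -/
theorem sibson_identity (S : Finset (EuclideanSpace ℝ (Fin 2)))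
    (s : EuclideanSpace ℝ (Fin 2))
    (hgen₁ : ∀ a ∈ S, ∀ b ∈ S, ∀ c ∈ S, a ≠ b → b ≠ c → a ≠ c →
      ¬ Collinear ℝ ({a, b, c} : Set (EuclideanSpace ℝ (Fin 2))))
    (hgen₂ : ∀ a ∈ S, ∀ b ∈ S, ∀ c ∈ S, ∀ d ∈ S,
      a ≠ b → a ≠ c → a ≠ d → b ≠ c → b ≠ d → c ≠ d →
      ¬ ∃ (o : EuclideanSpace ℝ (Fin 2)) (ρ : ℝ),
        dist o a = ρ ∧ dist o b = ρ ∧ dist o c = ρ ∧ dist o d = ρ)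
    (hs : s ∈ interior (convexHull ℝ (S : Set (EuclideanSpace ℝ (Fin 2)))))
    (hsS : s ∉ S)
    (w : EuclideanSpace ℝ (Fin 2) → ℝ)
    (hw : ∀ p, w p =
      (volume (voronoiCell (insert s (S : Set (EuclideanSpace ℝ (Fin 2)))) s ∩
        voronoiCell (S : Set (EuclideanSpace ℝ (Fin 2))) p)).toReal /
      (volume (voronoiCell (insert s (S : Set (EuclideanSpace ℝ (Fin 2)))) s)).toReal) :
    (∀ p ∈ S, 0 ≤ w p) ∧ ∑ p ∈ S, w p = 1 ∧ ∑ p ∈ S, w p • p = s :=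
  sibson_identity' S s hs hsS w hw
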